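/- Let X be a Baire topological vector space and f : X → ℝ quasiconvex. The set of points of discontinuity of f is meagre if and only if for every α ∈ ℝ, whenever the set {x : f(x) ≤ α} has empty interior, the set {x : f(x) < α} is nowhere dense. -/

import Mathlib

open Set Topology

private lemma nwd_meagre {X : Type*} [TopologicalSpace X] {s : Set X}
    (hs : IsNowhereDense s) : IsMeagre s := by
  rw [isMeagre_iff_countable_union_isNowhereDense]
  exact ⟨{s}, by simpa using hs, countable_singleton s, by simp⟩

private lemma nwd_mono {X : Type*} [TopologicalSpace X] {s t : Set X}
    (hs : IsNowhereDense s) (hts : t ⊆ s) : IsNowhereDense t := by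
  rw [IsNowhereDense] at hs ⊢
  have : interior (closure t) ⊆ interior (closure s) := interior_mono (closure_mono hts)
  rw [hs] at this
  exact eq_empty_iff_forall_notMem.2 fun x hx => this hx

private lemma nwd_diff {X : Type*} [TopologicalSpace X] {s : Set X}
    (hs : IsClosed s) : IsNowhereDense (s \ interior s) := by
  rw [IsNowhereDense]
  have h1 : closure (s \ interior s) ⊆ s := closure_minimal diff_subset hs
  have h2 : closure (s \ interior s) ⊆ (interior s)ᶜ :=
    closure_minimal (fun x hx => hx.2) (isClosed_compl_iff.2 isOpen_interior)
  rw [eq_empty_iff_forall_notMem]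
  intro x hx
  exact h2 (interior_subset hx) (interior_mono h1 hx)

private lemma meagre_union {X : Type*} [TopologicalSpace X] {s t : Set X}
    (hs : IsMeagre s) (ht : IsMeagre t) : IsMeagre (s ∪ t) := by
  rw [IsMeagre, compl_union]
  exact Filter.inter_mem hs ht

private lemma isMeagre_preimage_homeo {X : Type*} [TopologicalSpace X] (h : X ≃ₜ X)
    {s : Set X} (hs : IsMeagre s) : IsMeagre (h ⁻¹' s) := by
  rw [isMeagre_iff_countable_union_isNowhereDense] at hs ⊢
  obtain ⟨S, hS, hSc, hsub⟩ := hs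
  refine ⟨(fun t => h ⁻¹' t) '' S, ?_, hSc.image _, ?_⟩
  · rintro _ ⟨t, ht, rfl⟩
    have hnwd := hS t ht
    rw [IsNowhereDense] at hnwd ⊢
    rw [← h.preimage_closure, ← h.preimage_interior, hnwd, preimage_empty]
  · intro x hx
    obtain ⟨t, htS, hxt⟩ := hsub hx
    exact ⟨h ⁻¹' t, mem_image_of_mem _ htS, hxt⟩

private lemma isMeagre_iUnion_rat {X : Type*} [TopologicalSpace X] {s : ℚ → Set X}
    (h : ∀ q, IsMeagre (s q)) : IsMeagre (⋃ q, s q) := by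
  have e : ℕ ≃ ℚ := (Denumerable.eqv ℚ).symm
  rw [← e.surjective.iUnion_comp s]
  exact isMeagre_iUnion fun n => h _

private lemma int_cl_subset {X : Type*} [AddCommGroup X] [Module ℝ X] [TopologicalSpace X]
    [IsTopologicalAddGroup X] [ContinuousSMul ℝ X] {C D : Set X} (hD : Convex ℝ D)
    (hCD : C ⊆ D) {z : X} (hz : z ∈ interior D) :
    interior (closure C) ⊆ interior D := by
  intro x hx
  have hg : Continuous (fun t : ℝ => x + t • (x - z)) := by fun_prop
  have h0 : (fun t : ℝ => x + t • (x - z)) 0 = x := by simp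
  have hmem : ∀ᶠ t in 𝓝 (0 : ℝ), x + t • (x - z) ∈ interior (closure C) :=
    hg.continuousAt.preimage_mem_nhds (by simpa using isOpen_interior.mem_nhds hx)
  have hev : ∀ᶠ t in 𝓝[>] (0 : ℝ), x + t • (x - z) ∈ interior (closure C) :=
    eventually_nhdsWithin_of_eventually_nhds hmem
  obtain ⟨t, htmem, ht0⟩ := (hev.and (eventually_mem_nhdsWithin)).exists
  have ht0' : (0 : ℝ) < t := ht0
  have h1t : (0 : ℝ) < 1 + t := by linarith
  have h1t' : (1 : ℝ) + t ≠ 0 := ne_of_gt h1t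
  have hw : x + t • (x - z) ∈ closure D := closure_mono hCD (interior_subset htmem)
  have key := hD.combo_interior_closure_mem_interior hz hw
    (a := t / (1 + t)) (b := 1 / (1 + t))
    (div_pos ht0' h1t) (le_of_lt (div_pos one_pos h1t))
    (by field_simp
        ring)
  have heq : (t / (1 + t)) • z + (1 / (1 + t)) • (x + t • (x - z)) = x := by
    match_scalars <;> field_simp <;> ring
  rwa [heq] at key

theorem stmt13 {X : Type*} [AddCommGroup X] [Module ℝ X] [TopologicalSpace X]
    [IsTopologicalAddGroup X] [ContinuousSMul ℝ X] [BaireSpace X]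
    (f : X → ℝ) (hf : ∀ α : ℝ, Convex ℝ {x | f x < α})
    (hf' : ∀ α : ℝ, Convex ℝ {x | f x ≤ α}) :
    IsMeagre {x | ¬ ContinuousAt f x} ↔
      ∀ α : ℝ, interior {x | f x ≤ α} = ∅ → IsNowhereDense {x | f x < α} := by
  constructor
  · intro hD α hint
    rw [IsNowhereDense]
    by_contra hne
    obtain ⟨v₀, hv₀⟩ := nonempty_iff_ne_empty.2 hne
    have hU : interior (closure {x | f x < α}) ⊆ {x | f x ≤ α} := by
      intro v hvU
      set r : X ≃ₜ X := Homeomorph.subLeft (v + v) with hr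
      have hrapp : ∀ u : X, r u = (v + v) - u := fun u => rfl
      have hrv : r v = v := by rw [hrapp]; abel
      have hmeag : IsMeagre ({x | ¬ContinuousAt f x} ∪ r ⁻¹' {x | ¬ContinuousAt f x}) :=
        meagre_union hD (isMeagre_preimage_homeo r hD)
      have hdense : Dense (({x | ¬ContinuousAt f x} ∪ r ⁻¹' {x | ¬ContinuousAt f x})ᶜ) :=
        dense_of_mem_residual hmeag
      have hWopen : IsOpen (interior (closure {x | f x < α}) ∩
          r ⁻¹' interior (closure {x | f x < α})) :=
        isOpen_interior.inter (isOpen_interior.preimage r.continuous)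
      have hvW : v ∈ interior (closure {x | f x < α}) ∩
          r ⁻¹' interior (closure {x | f x < α}) := ⟨hvU, by rw [mem_preimage, hrv]; exact hvU⟩
      obtain ⟨u, huD, huW⟩ := hdense.exists_mem_open hWopen ⟨v, hvW⟩
      rw [mem_compl_iff, mem_union, not_or] at huD
      have hcu : ContinuousAt f u := not_not.1 huD.1
      have hcru : ContinuousAt f (r u) := not_not.1 huD.2
      have hcont : ∀ w, w ∈ interior (closure {x | f x < α}) → ContinuousAt f w →
          f w ≤ α := by
        intro w hw hc
        by_contra hgt
        push_neg at hgt
        have hnb : f ⁻¹' (Ioi α) ∈ 𝓝 w := hc (Ioi_mem_nhds hgt)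
        have hwcl : w ∈ closure {x | f x < α} := interior_subset hw
        rw [mem_closure_iff_nhds] at hwcl
        obtain ⟨y, hy1, hy2⟩ := hwcl _ hnb
        have h1 : α < f y := hy1
        have h2 : f y < α := hy2
        linarith
      have hu1 : f u ≤ α := hcont u huW.1 hcu
      have hu2 : f (r u) ≤ α := hcont (r u) huW.2 hcru
      have hmemv := hf' α hu1 hu2 (by norm_num : (0:ℝ) ≤ 1/2) (by norm_num : (0:ℝ) ≤ 1/2)
        (by norm_num : (1/2 : ℝ) + 1/2 = 1)
      have heq : (1/2 : ℝ) • u + (1/2 : ℝ) • (r u) = v := by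
        rw [hrapp]; module
      rwa [heq] at hmemv
    have hv' : v₀ ∈ interior {x | f x ≤ α} :=
      interior_maximal hU isOpen_interior hv₀
    rw [hint] at hv'
    exact hv'
  · intro hcond
    have hcover : {x | ¬ ContinuousAt f x} ⊆ ⋃ q : ℚ,
        (({x | f x < (q:ℝ)} \ interior {x | f x < (q:ℝ)}) ∪
          (closure {x | f x ≤ (q:ℝ)} \ {x | f x ≤ (q:ℝ)})) := by
      intro x hx
      by_contra hx'
      rw [mem_iUnion] at hx'
      push_neg at hx'
      simp only [mem_union, not_or, mem_diff, not_and, not_not] at hx'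
      apply hx
      rw [ContinuousAt]
      apply tendsto_order.2
      constructor
      · intro b hb
        obtain ⟨q, hq1, hq2⟩ := exists_rat_btwn hb
        have h1 := (hx' q).2
        have hnot : x ∉ closure {y | f y ≤ (q:ℝ)} := by
          intro hc
          exact absurd (h1 hc) (not_le.2 hq2)
        have hnb : (closure {y | f y ≤ (q:ℝ)})ᶜ ∈ 𝓝 x :=
          isClosed_closure.isOpen_compl.mem_nhds hnot
        filter_upwards [hnb] with y hy
        have : ¬ f y ≤ (q:ℝ) := fun h => hy (subset_closure h)
        push_neg at this
        linarith
      · intro b hb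
        obtain ⟨q, hq1, hq2⟩ := exists_rat_btwn hb
        have h1 := (hx' q).1
        have hnb : interior {y | f y < (q:ℝ)} ∈ 𝓝 x :=
          isOpen_interior.mem_nhds (h1 hq1)
        filter_upwards [hnb] with y hy
        have : f y < (q:ℝ) := show y ∈ {y | f y < (q:ℝ)} from interior_subset hy
        linarith
    refine IsMeagre.mono hcover ?_
    apply isMeagre_iUnion_rat
    intro q
    apply meagre_union
    · by_cases hc : ∃ s : ℝ, s < (q:ℝ) ∧ (interior {x | f x ≤ s}).Nonempty
      · obtain ⟨s, hsq, z, hz⟩ := hc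
        have hzlt : z ∈ interior {x | f x < (q:ℝ)} :=
          interior_mono (fun y hy => lt_of_le_of_lt hy hsq) hz
        have hsub := int_cl_subset (hf (q:ℝ)) (subset_refl _) hzlt
        have hBsub : {x | f x < (q:ℝ)} \ interior {x | f x < (q:ℝ)} ⊆
            closure {x | f x < (q:ℝ)} \ interior (closure {x | f x < (q:ℝ)}) :=
          fun y hy => ⟨subset_closure hy.1, fun h => hy.2 (hsub h)⟩
        have hnwd : IsNowhereDense (closure {x | f x < (q:ℝ)} \
            interior (closure {x | f x < (q:ℝ)})) := nwd_diff isClosed_closure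
        exact (nwd_meagre hnwd).mono hBsub
      · push_neg at hc
        have hsub : {x | f x < (q:ℝ)} ⊆
            ⋃ s : ℚ, ⋃ (_ : (s:ℝ) < (q:ℝ)), {x | f x < (s:ℝ)} := by
          intro x hx
          obtain ⟨s, h1, h2⟩ := exists_rat_btwn (show f x < (q:ℝ) from hx)
          exact mem_iUnion.2 ⟨s, mem_iUnion.2 ⟨h2, h1⟩⟩
        refine IsMeagre.mono ((diff_subset).trans hsub) ?_
        apply isMeagre_iUnion_rat
        intro s
        by_cases hsq : (s:ℝ) < (q:ℝ)
        · exact (nwd_meagre (hcond (s:ℝ) (hc (s:ℝ) hsq))).mono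
            (iUnion_subset fun _ => subset_rfl)
        · exact IsMeagre.empty.mono (iUnion_subset fun h => absurd h hsq)
    · by_cases hc : ∃ s : ℝ, (q:ℝ) < s ∧ interior {x | f x ≤ s} = ∅
      · obtain ⟨s, hqs, hse⟩ := hc
        have hnwd := hcond s hse
        have hsub : closure {x | f x ≤ (q:ℝ)} ⊆ closure {x | f x < s} :=
          closure_mono (fun y hy => lt_of_le_of_lt hy hqs)
        exact nwd_meagre (nwd_mono hnwd.closure (diff_subset.trans hsub))
      · push_neg at hc
        have hkey : interior (closure {x | f x ≤ (q:ℝ)}) ⊆ {x | f x ≤ (q:ℝ)} := by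
          intro x hx
          by_contra hgt
          simp only [mem_setOf_eq, not_le] at hgt
          obtain ⟨s, h1, h2⟩ := exists_between hgt
          obtain ⟨z, hz⟩ := hc s h1
          have hsubint := int_cl_subset (hf' s)
            (fun y (hy : f y ≤ (q:ℝ)) => le_trans hy (le_of_lt h1)) hz
          exact absurd (interior_subset (hsubint hx)) (not_le.2 h2)
        have hEsub : closure {x | f x ≤ (q:ℝ)} \ {x | f x ≤ (q:ℝ)} ⊆
            closure {x | f x ≤ (q:ℝ)} \ interior (closure {x | f x ≤ (q:ℝ)}) :=
          fun y hy => ⟨hy.1, fun h => hy.2 (hkey h)⟩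
        exact (nwd_meagre (nwd_diff isClosed_closure)).mono hEsub
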